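/- Let Q be a finite poset. Then the rewrite relation ⇝_Q on Q-Schröder trees is terminating (there is no infinite sequence of one-step rewritings), and its normal forms (the trees to which no rewriting applies) are exactly the Q-alternating Schröder trees. -/
import Mathlib


open scoped Classical

/-- The minimum of two comparable elements of a poset. -/
noncomputable def pmin {Q : Type*} [PartialOrder Q] (a b : Q) : Q :=
  if a ≤ b then a else b

/-- Planar rooted trees with internal nodes labeled by `Q` and an arbitrary (finite)
list of children.  `Q`-Schröder trees are those satisfying `SchWF` below. -/
inductive SchTree (Q : Type*) where
  | leaf : SchTree Q
  | node : Q → List (SchTree Q) → SchTree Q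

/-- Well-formedness for `Q`-Schröder trees: every internal node has at least two
children. -/
inductive SchWF {Q : Type*} : SchTree Q → Prop
  | leaf : SchWF .leaf
  | node (a : Q) (ts : List (SchTree Q)) :
      2 ≤ ts.length → (∀ t ∈ ts, SchWF t) → SchWF (.node a ts)

/-- A tree is `Q`-alternating if whenever an internal node labeled `a` has an
internal-node child labeled `b`, the elements `a` and `b` are incomparable in `Q`. -/
inductive Alt {Q : Type*} [PartialOrder Q] : SchTree Q → Prop
  | leaf : Alt .leaf
  | node (a : Q) (ts : List (SchTree Q)) :
      (∀ t ∈ ts, Alt t) →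
      (∀ (b : Q) (cs : List (SchTree Q)), SchTree.node b cs ∈ ts → ¬ a ≤ b ∧ ¬ b ≤ a) →
      Alt (.node a ts)

/-- The one-step rewrite relation `⇝_Q`: the closure under contexts of the rule sending
an internal node labeled `b` having among its children an internal node labeled `a`,
with `a` and `b` comparable, to a single node labeled `a↑b` whose children are those of
the `b`-node with the `a`-node spliced by its own children. -/
inductive SRew {Q : Type*} [PartialOrder Q] : SchTree Q → SchTree Q → Prop
  | rule (a b : Q) (h : a ≤ b ∨ b ≤ a) (l1 l2 cs : List (SchTree Q)) :
      SRew (.node b (l1 ++ SchTree.node a cs :: l2))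
        (.node (pmin a b) (l1 ++ cs ++ l2))
  | ctx (c : Q) (l1 l2 : List (SchTree Q)) {t t' : SchTree Q} :
      SRew t t' → SRew (.node c (l1 ++ t :: l2)) (.node c (l1 ++ t' :: l2))

mutual
def isize {Q : Type*} : SchTree Q → Nat
  | .leaf => 0
  | .node _ ts => 1 + isizeL ts
def isizeL {Q : Type*} : List (SchTree Q) → Nat
  | [] => 0
  | t :: ts => isize t + isizeL ts
end

theorem isizeL_append {Q : Type*} (l1 l2 : List (SchTree Q)) :
    isizeL (l1 ++ l2) = isizeL l1 + isizeL l2 := by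
  induction l1 with
  | nil => simp [isizeL]
  | cons t ts ih => simp [isizeL, ih]; omega

theorem isize_le_of_mem {Q : Type*} {u : SchTree Q} {l : List (SchTree Q)}
    (h : u ∈ l) : isize u ≤ isizeL l := by
  induction l with
  | nil => simp at h
  | cons t ts ih =>
    rcases List.mem_cons.1 h with rfl | h
    · simp [isizeL]
    · have := ih h; simp [isizeL]; omega

theorem srew_isize {Q : Type*} [PartialOrder Q] {t t' : SchTree Q}
    (h : SRew t t') : isize t' < isize t := by
  induction h with
  | rule a b h l1 l2 cs =>
      simp [isize, isizeL, isizeL_append]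
  | ctx c l1 l2 h ih =>
      simp [isize, isizeL, isizeL_append]; omega

theorem alt_no_rew {Q : Type*} [PartialOrder Q] {t t' : SchTree Q}
    (h : SRew t t') : ¬ Alt t := by
  induction h with
  | rule a b h l1 l2 cs =>
      intro halt
      cases halt with
      | node _ _ h1 h2 =>
        have := h2 a cs (by simp)
        rcases h with h | h
        · exact this.2 h
        · exact this.1 h
  | ctx c l1 l2 h ih =>
      intro halt
      cases halt with
      | node _ _ h1 h2 => exact ih (h1 _ (by simp))

theorem not_alt_rew {Q : Type*} [PartialOrder Q] :
    ∀ n (t : SchTree Q), isize t ≤ n → SchWF t → ¬ Alt t → ∃ t', SRew t t' := by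
  intro n
  induction n with
  | zero =>
      intro t hs hwf hna
      cases t with
      | leaf => exact absurd Alt.leaf hna
      | node a ts => simp [isize] at hs
  | succ n ih =>
      intro t hs hwf hna
      cases t with
      | leaf => exact absurd Alt.leaf hna
      | node a ts =>
        by_cases hall : ∀ u ∈ ts, Alt u
        · -- must be a comparable internal child
          by_cases hcmp : ∀ (b : Q) (cs : List (SchTree Q)),
              SchTree.node b cs ∈ ts → ¬ a ≤ b ∧ ¬ b ≤ a
          · exact absurd (Alt.node a ts hall hcmp) hna
          · push_neg at hcmp
            obtain ⟨b, cs, hmem, hc⟩ := hcmp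
            obtain ⟨l1, l2, rfl⟩ := List.append_of_mem hmem
            refine ⟨_, SRew.rule b a ?_ l1 l2 cs⟩
            by_cases h1 : a ≤ b
            · exact Or.inr h1
            · exact Or.inl (hc h1)
        · push_neg at hall
          obtain ⟨u, hmem, hnalt⟩ := hall
          have hu : isize u ≤ n := by
            have := isize_le_of_mem hmem
            simp [isize] at hs; omega
          cases hwf with
          | node _ _ hlen hwfall =>
            obtain ⟨u', hru⟩ := ih u hu (hwfall u hmem) hnalt
            obtain ⟨l1, l2, rfl⟩ := List.append_of_mem hmem
            exact ⟨_, SRew.ctx a l1 l2 hru⟩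

/-- For a finite poset `Q`, the rewrite relation `⇝_Q` on `Q`-Schröder trees is
terminating, and its normal forms are exactly the `Q`-alternating Schröder trees. -/
theorem srew_terminating_and_normal_forms {Q : Type*} [Fintype Q] [PartialOrder Q] :
    WellFounded (fun s t : {u : SchTree Q // SchWF u} => SRew t.1 s.1) ∧
    ∀ t : SchTree Q, SchWF t → ((¬ ∃ t' : SchTree Q, SRew t t') ↔ Alt t) := by
  constructor
  · have hw : WellFounded (InvImage (· < ·) (fun s : {u : SchTree Q // SchWF u} => isize s.1)) :=
      InvImage.wf _ Nat.lt_wfRel.wf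
    exact Subrelation.wf (fun h => srew_isize h) hw
  · intro t hwf
    constructor
    · intro hne
      by_contra hna
      exact hne (not_alt_rew (isize t) t le_rfl hwf hna)
    · rintro halt ⟨t', hr⟩
      exact alt_no_rew hr halt
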